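/- arXiv:2005.09402 — 4 statements merged into one kernel-verified Lean document; each statement's English description precedes it below -/
import Mathlib

section
/- Let q be a prime power, n ≥ 1, and let α ∈ F_q (viewed inside F_{q^n}). Then the number of pairs (x,y) ∈ F_{q^n} × F_{q^n} satisfying x·(y^q − y) = α·x² − 1 equals q times the number of nonzero x ∈ F_{q^n} satisfying Tr(α·x − x⁻¹) = 0, where Tr denotes the field trace from F_{q^n} to F_q. (Equivalently, the projective curve x(y^q − y) = αx² − 1 has exactly two F_{q^n}-rational points at infinity, so its number of F_{q^n}-rational points is q·Z − q + 2, with Z the number of x ∈ F_{q^n} satisfying α·Tr(x) − Tr(x⁻¹) = 0 under the convention 0⁻¹ = 0.) -/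
/-!
For `x ≠ 0` the equation is `y ^ q - y = α x - x⁻¹`, and `x = 0` has no solutions. The
Artin–Schreier map `y ↦ y ^ q - y` is `𝔽_q`-linear with kernel `𝔽_q` (the roots of `X ^ q - X`);
its image lies in the kernel of the trace since the trace is Frobenius-invariant, and both have
codimension one, so they coincide. Hence each fibre has `q` or `0` elements according as the
trace of the right-hand side vanishes.
-/

open Polynomial

section ArtinSchreier

variable (F K : Type*) [Field F] [Fintype F] [Field K] [Algebra F K]

noncomputable def artinSchreier : K →ₗ[F] K :=
  (FiniteField.frobeniusAlgHom F K).toLinearMap - LinearMap.id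

variable {F K}

@[simp]
theorem artinSchreier_apply (y : K) : artinSchreier F K y = y ^ Fintype.card F - y := rfl

theorem ker_artinSchreier :
    LinearMap.ker (artinSchreier F K) = LinearMap.range (Algebra.linearMap F K) := by
  set q := Fintype.card F
  have hroots : {y : K | y ^ q = y} ⊆ (X ^ q - X : F[X]).rootSet K := fun y hy => by
    rw [mem_rootSet]
    refine ⟨FiniteField.X_pow_card_sub_X_ne_zero F Fintype.one_lt_card, ?_⟩
    simp [sub_eq_zero.mpr hy.out]
  have hrange : Set.range (algebraMap F K) ⊆ {y : K | y ^ q = y} := by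
    rintro _ ⟨a, rfl⟩
    simp [q, ← map_pow, FiniteField.pow_card]
  have hfin : {y : K | y ^ q = y}.Finite := ((X ^ q - X : F[X]).rootSet_finite K).subset hroots
  have hcard : {y : K | y ^ q = y}.ncard ≤ (Set.range (algebraMap F K)).ncard := by
    calc {y : K | y ^ q = y}.ncard ≤ ((X ^ q - X : F[X]).rootSet K).ncard :=
          Set.ncard_le_ncard hroots (rootSet_finite _ _)
      _ ≤ q := (ncard_rootSet_le _ _).trans (FiniteField.X_pow_card_sub_X_natDegree_eq F
          Fintype.one_lt_card).le
      _ = (Set.range (algebraMap F K)).ncard := by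
          rw [Set.ncard_range_of_injective (algebraMap F K).injective, Nat.card_eq_fintype_card]
  have hfixed := Set.eq_of_subset_of_ncard_le hrange hcard hfin
  ext y
  simp only [LinearMap.mem_ker, artinSchreier_apply, sub_eq_zero, LinearMap.mem_range,
    Algebra.linearMap_apply]
  exact (Set.ext_iff.mp hfixed y).symm

theorem trace_artinSchreier [FiniteDimensional F K] (y : K) :
    Algebra.trace F K (artinSchreier F K y) = 0 := by
  rw [artinSchreier_apply, map_sub, sub_eq_zero]
  exact Algebra.trace_eq_of_algEquiv (FiniteField.frobeniusAlgEquivOfAlgebraic F K) y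

theorem range_artinSchreier [Finite K] :
    LinearMap.range (artinSchreier F K) = LinearMap.ker (Algebra.trace F K) := by
  refine Submodule.eq_of_le_of_finrank_eq ?_ ?_
  · rintro _ ⟨y, rfl⟩
    exact trace_artinSchreier y
  · have h1 := LinearMap.finrank_range_add_finrank_ker (artinSchreier F K)
    have h2 := LinearMap.finrank_range_add_finrank_ker (Algebra.trace F K)
    rw [ker_artinSchreier,
      LinearMap.finrank_range_of_inj (f := Algebra.linearMap F K) (algebraMap F K).injective,
      Module.finrank_self] at h1
    rw [LinearMap.range_eq_top.mpr (Algebra.trace_surjective F K), finrank_top,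
      Module.finrank_self] at h2
    omega

open Classical in
theorem card_artinSchreier_fiber [Finite K] (c : K) :
    Nat.card {y : K // y ^ Fintype.card F - y = c} =
      if Algebra.trace F K c = 0 then Fintype.card F else 0 := by
  split_ifs with hc
  · obtain ⟨y₀, rfl⟩ : c ∈ LinearMap.range (artinSchreier F K) := by
      rwa [range_artinSchreier]
    calc Nat.card {y : K // y ^ Fintype.card F - y = artinSchreier F K y₀}
        = Nat.card (LinearMap.ker (artinSchreier F K)) :=
          Nat.card_congr ((artinSchreier F K).toAddMonoidHom.fiberEquivKer y₀)
      _ = Nat.card F := by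
          rw [ker_artinSchreier, ← Nat.card_congr
            (LinearEquiv.ofInjective (Algebra.linearMap F K) (algebraMap F K).injective).toEquiv]
      _ = Fintype.card F := Nat.card_eq_fintype_card
  · refine Nat.card_eq_zero.mpr (Or.inl ⟨fun ⟨y, hy⟩ => hc ?_⟩)
    rw [← hy]
    exact trace_artinSchreier y

open Classical in
theorem card_mul_artinSchreier_eq_mul_sq_sub_one [Finite K] (a x : K) :
    Nat.card {y : K // x * (y ^ Fintype.card F - y) = a * x ^ 2 - 1} =
      if x ≠ 0 ∧ Algebra.trace F K (a * x - x⁻¹) = 0 then Fintype.card F else 0 := by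
  by_cases hx : x = 0
  · subst hx
    simp
  · have hfactor : a * x ^ 2 - 1 = x * (a * x - x⁻¹) := by
      field_simp
    have hiff (y : K) : x * (y ^ Fintype.card F - y) = a * x ^ 2 - 1 ↔
        y ^ Fintype.card F - y = a * x - x⁻¹ := by
      rw [hfactor, mul_right_inj' hx]
    rw [Nat.card_congr (Equiv.subtypeEquivRight hiff), card_artinSchreier_fiber]
    simp [hx]

end ArtinSchreier

theorem stmt3_general (q : ℕ)
    (Fq K : Type) [Field Fq] [Fintype Fq] [Field K] [Fintype K] [Algebra Fq K]
    (hFq : Fintype.card Fq = q) (α : Fq) :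
    Nat.card {xy : K × K //
        xy.1 * (xy.2 ^ q - xy.2) = algebraMap Fq K α * xy.1 ^ 2 - 1} =
    q * Nat.card {x : K //
        x ≠ 0 ∧ Algebra.trace Fq K (algebraMap Fq K α * x - x⁻¹) = 0} := by
  classical
  subst hFq
  rw [Nat.card_congr (Equiv.subtypeProdEquivSigmaSubtype fun x y : K =>
      x * (y ^ Fintype.card Fq - y) = algebraMap Fq K α * x ^ 2 - 1), Nat.card_sigma]
  simp_rw [card_mul_artinSchreier_eq_mul_sq_sub_one]
  rw [Finset.sum_ite, Finset.sum_const_zero, add_zero, Finset.sum_const, smul_eq_mul, mul_comm,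
    Nat.card_eq_fintype_card, Fintype.card_subtype]

/-- Let `q` be a prime power, `n ≥ 1`, `Fq` a field with `q` elements and
`K` an extension of `Fq` of degree `n` (so `K` has `q ^ n` elements), and let `α ∈ Fq`.
The number of pairs `(x, y) ∈ K × K` with `x·(y^q − y) = α·x² − 1` equals `q` times the
number of nonzero `x ∈ K` with `Tr(α·x − x⁻¹) = 0`, where `Tr` is the field trace from
`K` to `Fq`. -/
theorem stmt3 (q n : ℕ) (hq : IsPrimePow q) (hn : 1 ≤ n)
    (Fq K : Type) [Field Fq] [Fintype Fq] [Field K] [Fintype K] [Algebra Fq K]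
    (hFq : Fintype.card Fq = q) (hK : Module.finrank Fq K = n) (α : Fq) :
    Nat.card {xy : K × K //
        xy.1 * (xy.2 ^ q - xy.2) = algebraMap Fq K α * xy.1 ^ 2 - 1} =
    q * Nat.card {x : K //
        x ≠ 0 ∧ Algebra.trace Fq K (algebraMap Fq K α * x - x⁻¹) = 0} :=
  stmt3_general q Fq K hFq α
end

section
/- Let q = 2^r be an even prime power, n ≥ 1, and let α ∈ F_q be nonzero. Then the number of pairs (x,y) ∈ F_{q^n} × F_{q^n} satisfying x·(y^q + y) = α·x² + 1 equals the number of pairs (x,y) ∈ F_{q^n} × F_{q^n} satisfying x·(y^q + y) = x² + 1. -/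
/-! In characteristic 2 every element of the finite field `Fq` is a square, say `α = β²`.
Since `β ∈ Fq` is fixed by `y ↦ y ^ q`, the substitution `(x, y) ↦ (β x, β⁻¹ y)` preserves
`x (y ^ q + y)` and turns `α x² + 1` into `(β x)² + 1`, so it maps one solution set
bijectively onto the other. -/

lemma Units.inv_pow_eq_of_pow_eq {M : Type*} [Monoid M] {q : ℕ} (u : Mˣ) (hu : (u : M) ^ q = u) :
    ((u⁻¹ : Mˣ) : M) ^ q = (u⁻¹ : Mˣ) := by
  rw [← Units.val_pow_eq_pow_val, inv_pow, show u ^ q = u from Units.ext (by simpa using hu)]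

lemma card_mul_pow_add_eq_unit_sq_mul_sq_add_one {R : Type*} [CommRing R] (q : ℕ) (u : Rˣ)
    (hu : (u : R) ^ q = u) :
    Nat.card {xy : R × R // xy.1 * (xy.2 ^ q + xy.2) = (u : R) ^ 2 * xy.1 ^ 2 + 1} =
    Nat.card {xy : R × R // xy.1 * (xy.2 ^ q + xy.2) = xy.1 ^ 2 + 1} := by
  refine Nat.card_congr <| ((Units.mulLeft u).prodCongr (Units.mulLeft u⁻¹)).subtypeEquiv ?_
  rintro ⟨x, y⟩
  have hinv := u.inv_pow_eq_of_pow_eq hu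
  have hcancel : (u : R) * ((u⁻¹ : Rˣ) : R) = 1 := u.mul_inv
  have hlhs : u * x * ((u⁻¹ : Rˣ) * y ^ q + (u⁻¹ : Rˣ) * y) = x * (y ^ q + y) := by
    linear_combination x * (y ^ q + y) * hcancel
  simp only [Equiv.prodCongr_apply, Prod.map, Units.mulLeft_apply, mul_pow _ y, hinv, hlhs,
    mul_pow (u : R) x]

theorem stmt4_general (r q : ℕ) (hq : q = 2 ^ r)
    (Fq K : Type) [Field Fq] [Fintype Fq] [Field K] [Algebra Fq K]
    (hFq : Fintype.card Fq = q)
    (α : Fq) (hα : α ≠ 0) :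
    Nat.card {xy : K × K //
        xy.1 * (xy.2 ^ q + xy.2) = algebraMap Fq K α * xy.1 ^ 2 + 1} =
    Nat.card {xy : K × K // xy.1 * (xy.2 ^ q + xy.2) = xy.1 ^ 2 + 1} := by
  have : CharP Fq 2 := charP_of_card_eq_prime_pow (hFq.trans hq)
  obtain ⟨β, rfl⟩ := isSquare_of_charTwo' α
  have hβ : algebraMap Fq K β ≠ 0 := by simpa using left_ne_zero_of_mul hα
  have hβq : algebraMap Fq K β ^ q = algebraMap Fq K β := by
    rw [← map_pow, ← hFq, FiniteField.pow_card]
  simpa [sq] using card_mul_pow_add_eq_unit_sq_mul_sq_add_one q (Units.mk0 _ hβ) hβq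

/-- Let `q = 2 ^ r` be an even prime power, `n ≥ 1`, `Fq` a field with
`q` elements, `K` an extension of `Fq` of degree `n`, and `α ∈ Fq` nonzero.  Then the
number of pairs `(x, y) ∈ K × K` with `x·(y^q + y) = α·x² + 1` equals the number of pairs
`(x, y) ∈ K × K` with `x·(y^q + y) = x² + 1`. -/
theorem stmt4 (r q n : ℕ) (hr : 1 ≤ r) (hq : q = 2 ^ r) (hn : 1 ≤ n)
    (Fq K : Type) [Field Fq] [Fintype Fq] [Field K] [Fintype K] [Algebra Fq K]
    (hFq : Fintype.card Fq = q) (hK : Module.finrank Fq K = n)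
    (α : Fq) (hα : α ≠ 0) :
    Nat.card {xy : K × K //
        xy.1 * (xy.2 ^ q + xy.2) = algebraMap Fq K α * xy.1 ^ 2 + 1} =
    Nat.card {xy : K × K // xy.1 * (xy.2 ^ q + xy.2) = xy.1 ^ 2 + 1} :=
  stmt4_general r q hq Fq K hFq α hα
end

section
/- Let p be a prime, q = p^r, n ≥ 1, and let α ∈ F_q be nonzero. Let B ⊆ F_q be a complete set of representatives of the cosets of F_p^× in F_q^× (so |B| = (q−1)/(p−1)). Let N_α denote the number of pairs (x,y) ∈ F_{q^n} × F_{q^n} satisfying x·(y^q − y) = α·x² − 1, and for β ∈ B let N_{α,β} denote the number of pairs (x,y) ∈ F_{q^n} × F_{q^n} satisfying x·(y^p − y) = β·(α·x² − 1). Then N_α − q^n + 1 = ∑_{β ∈ B} (N_{α,β} − q^n + 1). (This is the affine form of the statement that the curve C_α : x(y^q−y)=αx²−1 over F_q is the fiber product of the curves C_{α,β} : x(y^p−y)=β(αx²−1), each projective curve having exactly two points at infinity, so that #C_α(F_{q^n}) − (q^n+1) = ∑_{β∈B} (#C_{α,β}(F_{q^n}) − (q^n+1)).) -/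
/-!
For `x ≠ 0` the equation `x (y ^ q - y) = g x` has `q` solutions `y ∈ K` when
`Tr_{K/F_q} (g x / x) = 0` and none otherwise, because the image of the `F_q`-linear map
`y ↦ y ^ q - y`, whose kernel is `F_q`, is the kernel of the trace (additive Hilbert 90); the
same holds over `F_p`, and `Tr_{K/F_p} (β z) = Tr_{F_q/F_p} (β Tr_{K/F_q} z)`. So both sides are
sums over `x ∈ K^×`, and it suffices to prove, for every `t ∈ F_q`,
`q [t = 0] - 1 = ∑_{β ∈ B} (p [Tr_{F_q/F_p} (β t) = 0] - 1)`.
The summand on the right only depends on the coset `β F_p^×`, so `p - 1` times the right side is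
the sum over all `γ ∈ F_q^×`; summing over all `γ ∈ F_q` instead gives `(p - 1) q [t = 0]`,
because for `t ≠ 0` the functional `γ ↦ Tr (γ t)` is nonzero, so its kernel has `q / p`
elements.
-/

open Finset

namespace FiniteField

variable (F L : Type*) [Field F] [Fintype F] [Field L] [Algebra F L]

def artinSchreier : L →ₗ[F] L := (frobeniusAlgHom F L).toLinearMap - LinearMap.id

theorem artinSchreier_apply (y : L) : artinSchreier F L y = y ^ Fintype.card F - y := rfl

variable [Fintype L]

theorem pow_card_eq_self_iff {y : L} :
    y ^ Fintype.card F = y ↔ y ∈ Set.range (algebraMap F L) := by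
  refine ⟨fun hy => (IsGalois.mem_range_algebraMap_iff_fixed y).2 fun σ => ?_, ?_⟩
  · obtain ⟨k, rfl⟩ := (bijective_frobeniusAlgEquivOfAlgebraic_pow F L).2 σ
    simp only [AlgEquiv.coe_pow, coe_frobeniusAlgEquivOfAlgebraic]
    exact Function.iterate_fixed hy k
  · rintro ⟨a, rfl⟩
    rw [← map_pow, pow_card]

theorem ker_artinSchreier :
    LinearMap.ker (artinSchreier F L) = Subalgebra.toSubmodule ⊥ := by
  ext y
  rw [LinearMap.mem_ker, artinSchreier_apply, sub_eq_zero, pow_card_eq_self_iff,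
    Subalgebra.mem_toSubmodule, Algebra.mem_bot]

theorem finrank_ker_artinSchreier : Module.finrank F (LinearMap.ker (artinSchreier F L)) = 1 := by
  rw [ker_artinSchreier, Subalgebra.finrank_toSubmodule, Subalgebra.finrank_bot]

theorem range_artinSchreier :
    LinearMap.range (artinSchreier F L) = LinearMap.ker (Algebra.trace F L) := by
  have hle : LinearMap.range (artinSchreier F L) ≤ LinearMap.ker (Algebra.trace F L) := by
    rintro _ ⟨y, rfl⟩
    rw [LinearMap.mem_ker, artinSchreier_apply, map_sub, ← frobeniusAlgEquivOfAlgebraic_apply,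
      Algebra.trace_eq_of_algEquiv, sub_self]
  refine Submodule.eq_of_le_of_finrank_eq hle (Nat.add_right_cancel (m := 1) ?_)
  have htr : Algebra.trace F L ≠ 0 := fun h => by
    obtain ⟨y, hy⟩ := Algebra.trace_surjective F L 1
    simp [h] at hy
  rw [Module.Dual.finrank_ker_add_one_of_ne_zero htr, ← finrank_ker_artinSchreier F L,
    LinearMap.finrank_range_add_finrank_ker]

theorem card_filter_pow_card_sub_self_eq [DecidableEq F] [DecidableEq L] (c : L) :
    #{y : L | y ^ Fintype.card F - y = c} =
      if Algebra.trace F L c = 0 then Fintype.card F else 0 := by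
  split_ifs with hc
  · have hc' : c ∈ Set.range (artinSchreier F L) := by
      rw [← LinearMap.coe_range, range_artinSchreier]; exact hc
    change #{y | artinSchreier F L y = c} = _
    rw [AddMonoidHom.card_fiber_eq_of_mem_range _ hc' ⟨0, map_zero _⟩, ← Fintype.card_subtype]
    classical
    have hker : Fintype.card (LinearMap.ker (artinSchreier F L)) = Fintype.card F := by
      rw [Module.card_eq_pow_finrank (K := F), finrank_ker_artinSchreier, pow_one]
    convert hker
    exact LinearMap.mem_ker.symm
  · rw [card_eq_zero, filter_eq_empty_iff]
    rintro y - rfl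
    exact hc (by
      rw [← artinSchreier_apply, ← LinearMap.mem_ker, ← range_artinSchreier]; exact ⟨y, rfl⟩)

theorem natCard_mul_pow_card_sub_self_eq_sum [DecidableEq F] [DecidableEq L] (g : L → L)
    (hg : g 0 ≠ 0) :
    (Nat.card {xy : L × L // xy.1 * (xy.2 ^ Fintype.card F - xy.2) = g xy.1} : ℤ)
        - Fintype.card L + 1 =
      ∑ x ∈ univ.erase 0,
        ((if Algebra.trace F L (g x / x) = 0 then (Fintype.card F : ℤ) else 0) - 1) := by
  have hfiber : ∀ x : L, #{y : L | x * (y ^ Fintype.card F - y) = g x} =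
      if x = 0 then 0 else if Algebra.trace F L (g x / x) = 0 then Fintype.card F else 0 := by
    intro x
    rcases eq_or_ne x 0 with rfl | hx
    · rw [if_pos rfl, card_eq_zero, filter_eq_empty_iff]
      rintro y - h
      exact hg (zero_mul (_ : L) ▸ h).symm
    · simp_rw [if_neg hx, mul_comm x, ← eq_div_iff hx]
      exact card_filter_pow_card_sub_self_eq F L _
  have hcount : Nat.card {xy : L × L // xy.1 * (xy.2 ^ Fintype.card F - xy.2) = g xy.1} =
      ∑ x ∈ univ.erase 0, if Algebra.trace F L (g x / x) = 0 then Fintype.card F else 0 := by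
    rw [Nat.card_eq_fintype_card, Fintype.card_subtype, card_filter, Fintype.sum_prod_type]
    simp_rw [← card_filter, hfiber]
    rw [← add_sum_erase _ _ (mem_univ 0), if_pos rfl, zero_add]
    exact sum_congr rfl fun x hx => if_neg (ne_of_mem_erase hx)
  have hcard : Fintype.card L = #(univ.erase (0 : L)) + 1 := by
    rw [card_erase_of_mem (mem_univ _), card_univ, Nat.sub_add_cancel Fintype.card_pos]
  rw [hcount, hcard, sum_sub_distrib, sum_const, nsmul_one]
  push_cast
  ring

end FiniteField

section TraceSums

variable {F E : Type*} [Field F] [Fintype F] [Field E] [Fintype E] [Algebra F E]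

theorem sum_erase_zero_eq_card_sub_one_nsmul_sum {M : Type*} [AddCommMonoid M] [DecidableEq E]
    [DecidableEq F] {B : Finset E} (hB0 : ∀ β ∈ B, β ≠ 0)
    (hBrep : ∀ γ : E, γ ≠ 0 → ∃! β, β ∈ B ∧ γ * β⁻¹ ∈ Set.range (algebraMap F E))
    (f : E → M) (hf : ∀ (c : F) (γ : E), c ≠ 0 → f (algebraMap F E c * γ) = f γ) :
    ∑ γ ∈ univ.erase 0, f γ = (Fintype.card F - 1) • ∑ β ∈ B, f β := by
  calc ∑ γ ∈ univ.erase 0, f γ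
      = ∑ βc ∈ B ×ˢ univ.erase (0 : F), f (algebraMap F E βc.2 * βc.1) := by
        symm
        refine sum_nbij (fun βc => algebraMap F E βc.2 * βc.1) ?_ ?_ ?_ fun _ _ => rfl
        · simp only [mem_product, mem_erase, mem_univ, and_true]
          rintro ⟨β, c⟩ ⟨hβ, hc⟩
          exact mul_ne_zero ((map_ne_zero _).2 hc) (hB0 β hβ)
        · rintro ⟨β₁, c₁⟩ h₁ ⟨β₂, c₂⟩ h₂
            (heq : algebraMap F E c₁ * β₁ = algebraMap F E c₂ * β₂)
          simp only [coe_product, Set.mem_prod, mem_coe, mem_erase, mem_univ, and_true] at h₁ h₂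
          obtain ⟨hβ₁, hc₁⟩ := h₁
          obtain ⟨hβ₂, -⟩ := h₂
          have hγ : algebraMap F E c₁ * β₁ ≠ 0 := mul_ne_zero ((map_ne_zero _).2 hc₁) (hB0 _ hβ₁)
          obtain rfl : β₁ = β₂ := (hBrep _ hγ).unique
            ⟨hβ₁, c₁, by rw [mul_inv_cancel_right₀ (hB0 _ hβ₁)]⟩
            ⟨hβ₂, c₂, by rw [heq, mul_inv_cancel_right₀ (hB0 _ hβ₂)]⟩
          rw [(algebraMap F E).injective (mul_right_cancel₀ (hB0 _ hβ₁) heq)]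
        · intro γ hγ
          obtain ⟨β, ⟨hβ, c, hc⟩, -⟩ := hBrep γ (ne_of_mem_erase hγ)
          have hγβ : algebraMap F E c * β = γ := by rw [hc, inv_mul_cancel_right₀ (hB0 β hβ)]
          refine ⟨(β, c), ?_, hγβ⟩
          simp only [coe_product, Set.mem_prod, mem_coe, mem_erase, mem_univ, and_true]
          refine ⟨hβ, fun hc0 => ne_of_mem_erase hγ ?_⟩
          rw [← hγβ, hc0, map_zero, zero_mul]
    _ = ∑ β ∈ B, ∑ _c ∈ univ.erase (0 : F), f β :=
        sum_product .. |>.trans <| sum_congr rfl fun β _ => sum_congr rfl fun c hc =>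
          hf c β (ne_of_mem_erase hc)
    _ = (Fintype.card F - 1) • ∑ β ∈ B, f β := by
        simp only [sum_const, card_erase_of_mem (mem_univ _), card_univ, smul_sum]

theorem card_filter_trace_mul_eq_zero_mul_card [DecidableEq F] {t : E} (ht : t ≠ 0) :
    #{γ : E | Algebra.trace F E (γ * t) = 0} * Fintype.card F = Fintype.card E := by
  classical
  set φ : Module.Dual F E := (Algebra.trace F E).comp (LinearMap.mulRight F t)
  have hφ : φ ≠ 0 := fun h => by
    obtain ⟨δ, hδ⟩ := Algebra.trace_surjective F E 1
    have := LinearMap.congr_fun h (δ * t⁻¹)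
    simp [φ, ht, hδ] at this
  have hker : #{γ : E | Algebra.trace F E (γ * t) = 0} = Fintype.card (LinearMap.ker φ) := by
    rw [← Fintype.card_subtype]
    exact Fintype.card_congr (Equiv.refl _)
  rw [hker, Module.card_eq_pow_finrank (K := F) (V := E),
    ← Module.Dual.finrank_ker_add_one_of_ne_zero hφ, pow_succ, ← Module.card_eq_pow_finrank]

theorem sum_ite_trace_mul_eq_zero_sub_one [DecidableEq E] [DecidableEq F] {B : Finset E}
    (hB0 : ∀ β ∈ B, β ≠ 0)
    (hBrep : ∀ γ : E, γ ≠ 0 → ∃! β, β ∈ B ∧ γ * β⁻¹ ∈ Set.range (algebraMap F E)) (t : E) :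
    ∑ β ∈ B, ((if Algebra.trace F E (β * t) = 0 then (Fintype.card F : ℤ) else 0) - 1) =
      (if t = 0 then (Fintype.card E : ℤ) else 0) - 1 := by
  set h : E → ℤ :=
    fun γ => (if Algebra.trace F E (γ * t) = 0 then (Fintype.card F : ℤ) else 0) - 1
  have hinv : ∀ (c : F) (γ : E), c ≠ 0 → h (algebraMap F E c * γ) = h γ := by
    intro c γ hc
    simp only [h, ← Algebra.smul_def, smul_mul_assoc, map_smul, smul_eq_mul, mul_eq_zero, hc,
      false_or]
  have hall :
      ∑ γ, h γ = ((Fintype.card F : ℤ) - 1) * if t = 0 then (Fintype.card E : ℤ) else 0 := by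
    rcases eq_or_ne t 0 with rfl | ht
    · simp [h]
      ring
    · have := card_filter_trace_mul_eq_zero_mul_card (F := F) ht
      simp only [h, sum_sub_distrib, sum_ite, sum_const_zero, sum_const, nsmul_eq_mul,
        if_neg ht]
      rw [card_univ, ← this]
      push_cast
      ring
  have horbit := sum_erase_zero_eq_card_sub_one_nsmul_sum hB0 hBrep h hinv
  rw [sum_erase_eq_sub (mem_univ 0), hall] at horbit
  have h0 : h 0 = (Fintype.card F : ℤ) - 1 := by simp [h]
  have hq : (Fintype.card F : ℤ) - 1 ≠ 0 :=
    sub_ne_zero.2 (by exact_mod_cast Fintype.one_lt_card.ne')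
  rw [h0, nsmul_eq_mul, Nat.cast_pred Fintype.card_pos] at horbit
  apply mul_left_cancel₀ hq
  rw [← horbit]
  ring

end TraceSums

theorem stmt6_general (p r q n : ℕ) [Fact p.Prime] (hq : q = p ^ r)
    (Fq K : Type) [Field Fq] [Fintype Fq] [Field K] [Fintype K] [Algebra Fq K]
    (hFq : Fintype.card Fq = q) (hK : Module.finrank Fq K = n)
    (B : Finset Fq) (hB0 : ∀ β ∈ B, β ≠ 0)
    (hBrep : ∀ γ : Fq, γ ≠ 0 → ∃! β, β ∈ B ∧ (γ * β⁻¹) ^ p = γ * β⁻¹)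
    (α : Fq) :
    (Nat.card {xy : K × K //
        xy.1 * (xy.2 ^ q - xy.2) = algebraMap Fq K α * xy.1 ^ 2 - 1} : ℤ)
        - (q : ℤ) ^ n + 1 =
    ∑ β ∈ B, ((Nat.card {xy : K × K // xy.1 * (xy.2 ^ p - xy.2) =
        algebraMap Fq K β * (algebraMap Fq K α * xy.1 ^ 2 - 1)} : ℤ)
        - (q : ℤ) ^ n + 1) := by
  classical
  have : CharP Fq p := charP_of_card_eq_prime_pow (hFq.trans hq)
  have : CharP K p := charP_of_injective_algebraMap (algebraMap Fq K).injective p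
  let : Algebra (ZMod p) Fq := ZMod.algebra Fq p
  let : Algebra (ZMod p) K := ZMod.algebra K p
  have : IsScalarTower (ZMod p) Fq K := .of_algebraMap_eq' (RingHom.ext_zmod _ _)
  have hcardK : (Fintype.card K : ℤ) = (q : ℤ) ^ n := by
    rw [Module.card_eq_pow_finrank (K := Fq), hFq, hK, Nat.cast_pow]
  have hBrep' :
      ∀ γ : Fq, γ ≠ 0 → ∃! β, β ∈ B ∧ γ * β⁻¹ ∈ Set.range (algebraMap (ZMod p) Fq) := by
    simpa only [← FiniteField.pow_card_eq_self_iff, ZMod.card] using hBrep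
  have hNα := FiniteField.natCard_mul_pow_card_sub_self_eq_sum Fq K
    (fun x => algebraMap Fq K α * x ^ 2 - 1) (by simp)
  have htrace : ∀ (β : Fq) (y : K), Algebra.trace (ZMod p) K (algebraMap Fq K β * y) =
      Algebra.trace (ZMod p) Fq (β * Algebra.trace Fq K y) := fun β y => by
    rw [← Algebra.trace_trace (S := Fq), ← Algebra.smul_def, map_smul, smul_eq_mul]
  have hNβ : ∀ β ∈ B, _ := fun β hβ => by
    have := FiniteField.natCard_mul_pow_card_sub_self_eq_sum (ZMod p) K
      (fun x => algebraMap Fq K β * (algebraMap Fq K α * x ^ 2 - 1)) (by simpa using hB0 β hβ)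
    simp_rw [ZMod.card, hcardK, mul_div_assoc, htrace] at this
    exact this
  rw [hFq, hcardK] at hNα
  rw [hNα, sum_congr rfl hNβ, sum_comm]
  refine sum_congr rfl fun x _ => ?_
  simpa only [ZMod.card, hFq] using (sum_ite_trace_mul_eq_zero_sub_one hB0 hBrep' _).symm

/-- Let `p` be a prime, `q = p ^ r`, `n ≥ 1`, `Fq` a field with `q`
elements, `K` an extension of `Fq` of degree `n`, and `α ∈ Fq` nonzero.  Let `B ⊆ Fq` be a
complete set of representatives of the cosets of `F_p^×` in `Fq^×` (an element `c ∈ Fq^×`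
lies in the prime subfield `F_p` iff `c ^ p = c`).  With `N_α` the number of pairs
`(x, y) ∈ K × K` with `x·(y^q − y) = α·x² − 1` and, for `β ∈ B`, `N_{α,β}` the number of
pairs with `x·(y^p − y) = β·(α·x² − 1)`, we have
`N_α − q^n + 1 = ∑_{β ∈ B} (N_{α,β} − q^n + 1)`. -/
theorem stmt6 (p r q n : ℕ) [Fact p.Prime] (hr : 1 ≤ r) (hq : q = p ^ r) (hn : 1 ≤ n)
    (Fq K : Type) [Field Fq] [Fintype Fq] [Field K] [Fintype K] [Algebra Fq K]
    (hFq : Fintype.card Fq = q) (hK : Module.finrank Fq K = n)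
    (B : Finset Fq) (hB0 : ∀ β ∈ B, β ≠ 0)
    (hBrep : ∀ γ : Fq, γ ≠ 0 → ∃! β, β ∈ B ∧ (γ * β⁻¹) ^ p = γ * β⁻¹)
    (α : Fq) (hα : α ≠ 0) :
    (Nat.card {xy : K × K //
        xy.1 * (xy.2 ^ q - xy.2) = algebraMap Fq K α * xy.1 ^ 2 - 1} : ℤ)
        - (q : ℤ) ^ n + 1 =
    ∑ β ∈ B, ((Nat.card {xy : K × K // xy.1 * (xy.2 ^ p - xy.2) =
        algebraMap Fq K β * (algebraMap Fq K α * xy.1 ^ 2 - 1)} : ℤ)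
        - (q : ℤ) ^ n + 1) :=
  stmt6_general p r q n hq Fq K hFq hK B hB0 hBrep α
end

section
/- The number of elements a ∈ F_{4^5} (the field with 4^5 = 1024 elements) such that Tr(a) = 0 and Tr(a⁻¹) = 0, where Tr denotes the field trace from F_{4^5} to F_4 and by convention 0⁻¹ = 0, equals 31. That is, F_4(5,0,0) = 31. -/
/-!
`Tr a = 0` iff `traceSum a = a + a⁴ + a¹⁶ + a⁶⁴ + a²⁵⁶` vanishes. With `y = a³` one has
`traceSum a = a · traceCore y` and, for `a ≠ 0`, `a²⁵⁶ · traceSum a⁻¹ = traceCoreRev y`, where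
`traceCoreRev` is the reversal of `traceCore`. In characteristic `2` these two polynomials of
degree `85` have gcd `traceCoreGcd` of degree `10` (cofactors from the extended Euclidean algorithm
over `𝔽₂`), so the nonzero elements counted are the roots of `traceCoreGcd (X³)`. That
polynomial divides `(traceSum X)⁴ - traceSum X = X¹⁰²⁴ - X`, hence has exactly `30` distinct roots
in the field, and `a = 0` is the `31`st element.
-/

open Polynomial

section CharTwoIdentities

variable {A : Type*} [CommRing A]

def traceSum (x : A) : A := x + x ^ 4 + x ^ 16 + x ^ 64 + x ^ 256

def traceCore (y : A) : A := y ^ 85 + y ^ 21 + y ^ 5 + y + 1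

def traceCoreRev (y : A) : A := y ^ 85 + y ^ 84 + y ^ 80 + y ^ 64 + 1

def traceCoreGcd (y : A) : A :=
  y ^ 10 + y ^ 9 + y ^ 7 + y ^ 6 + y ^ 5 + y ^ 4 + y ^ 3 + y + 1

theorem traceSum_eq_mul_traceCore (x : A) : traceSum x = x * traceCore (x ^ 3) := by
  unfold traceSum traceCore; ring

theorem pow_mul_traceSum_inv {K : Type*} [Field K] {x : K} (hx : x ≠ 0) :
    x ^ 256 * traceSum x⁻¹ = traceCoreRev (x ^ 3) := by
  unfold traceSum traceCoreRev; field_simp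

theorem traceCoreGcd_zero : traceCoreGcd (0 : A) = 1 := by
  simp [traceCoreGcd]

variable [CharP A 2]

theorem traceSum_pow_four_sub_self (x : A) : traceSum x ^ 4 - traceSum x = x ^ 1024 - x := by
  unfold traceSum; ring_nf; reduce_mod_char!

theorem traceCoreGcd_dvd_traceCore (y : A) : traceCoreGcd y ∣ traceCore y :=
  Dvd.intro (y ^ 75 + y ^ 74 + y ^ 73 + y ^ 70 + y ^ 68 + y ^ 66 + y ^ 65 +
      y ^ 64 + y ^ 63 + y ^ 61 + y ^ 59 + y ^ 56 + y ^ 55 + y ^ 54 + y ^ 44 + y ^ 43 + y ^ 42 +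
      y ^ 39 + y ^ 37 + y ^ 35 + y ^ 34 + y ^ 33 + y ^ 32 + y ^ 30 + y ^ 28 + y ^ 25 + y ^ 24 +
      y ^ 23 + y ^ 13 + y ^ 12 + y ^ 10 + y ^ 9 + y ^ 8 + y ^ 3 + 1)
    (by unfold traceCore traceCoreGcd; ring_nf; reduce_mod_char!)

theorem traceCoreGcd_dvd_traceCoreRev (y : A) : traceCoreGcd y ∣ traceCoreRev y :=
  Dvd.intro (y ^ 75 + y ^ 72 + y ^ 67 + y ^ 66 + y ^ 65 + y ^ 63 +
      y ^ 62 + y ^ 52 + y ^ 51 + y ^ 50 + y ^ 47 + y ^ 45 + y ^ 43 + y ^ 42 + y ^ 41 + y ^ 40 +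
      y ^ 38 + y ^ 36 + y ^ 33 + y ^ 32 + y ^ 31 + y ^ 21 + y ^ 20 + y ^ 19 + y ^ 16 + y ^ 14 +
      y ^ 12 + y ^ 11 + y ^ 10 + y ^ 9 + y ^ 7 + y ^ 5 + y ^ 2 + y + 1)
    (by unfold traceCoreRev traceCoreGcd; ring_nf; reduce_mod_char!)

theorem traceCoreGcd_eq_bezout (y : A) :
    traceCoreGcd y = (y ^ 71 + y ^ 68 + y ^ 67 + y ^ 65 + y ^ 64 + y ^ 63 + y ^ 61 + y ^ 56 +
      y ^ 54 + y ^ 53 + y ^ 51 + y ^ 49 + y ^ 48 + y ^ 47 + y ^ 41 + y ^ 40 + y ^ 39 + y ^ 37 +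
      y ^ 36 + y ^ 24 + y ^ 23 + y ^ 20 + y ^ 18 + y ^ 14 + y ^ 10 + y ^ 9 + y ^ 8 + y ^ 7 +
      y ^ 3 + 1) * traceCore y + (y ^ 71 + y ^ 70 + y ^ 69 + y ^ 67 + y ^ 63 + y ^ 61 + y ^ 60 +
      y ^ 59 + y ^ 55 + y ^ 54 + y ^ 51 + y ^ 50 + y ^ 47 + y ^ 46 + y ^ 38 + y ^ 36 + y ^ 35 +
      y ^ 31 + y ^ 30 + y ^ 24 + y ^ 20 + y ^ 18 + y ^ 13 + y ^ 12 + y ^ 11 + y ^ 10 + y ^ 9 +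
      y ^ 8 + y ^ 6) * traceCoreRev y := by
  unfold traceCore traceCoreRev traceCoreGcd; ring_nf; reduce_mod_char!

theorem traceCore_eq_zero_and_traceCoreRev_eq_zero_iff (y : A) :
    traceCore y = 0 ∧ traceCoreRev y = 0 ↔ traceCoreGcd y = 0 := by
  constructor
  · rintro ⟨hp, hq⟩
    rw [traceCoreGcd_eq_bezout, hp, hq, mul_zero, mul_zero, add_zero]
  · intro hg
    exact ⟨zero_dvd_iff.1 (hg ▸ traceCoreGcd_dvd_traceCore y),
      zero_dvd_iff.1 (hg ▸ traceCoreGcd_dvd_traceCoreRev y)⟩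

theorem traceCoreGcd_pow_three_dvd (x : A) : traceCoreGcd (x ^ 3) ∣ x ^ 1024 - x := by
  rw [← traceSum_pow_four_sub_self, traceSum_eq_mul_traceCore]
  have hdvd := dvd_mul_of_dvd_right (traceCoreGcd_dvd_traceCore (x ^ 3)) x
  exact dvd_sub (dvd_pow hdvd four_ne_zero) hdvd

end CharTwoIdentities

theorem FiniteField.card_rootSet_of_dvd_X_pow_card_sub_X {K : Type*} [Field K] [Fintype K]
    {f : K[X]} (hf : f ∣ X ^ Fintype.card K - X) : Fintype.card (f.rootSet K) = f.natDegree := by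
  have h0 : (X ^ Fintype.card K - X : K[X]) ≠ 0 := X_pow_card_sub_X_ne_zero K Fintype.one_lt_card
  have hsplits : Splits (X ^ Fintype.card K - X : K[X]) := by
    classical
    rw [splits_iff_card_roots, roots_X_pow_card_sub_X,
      X_pow_card_sub_X_natDegree_eq K Fintype.one_lt_card]
    rfl
  have hchar : ringChar K ∣ Fintype.card K :=
    (CharP.cast_eq_zero_iff K _ _).1 (FiniteField.cast_card_eq_zero K)
  refine card_rootSet_eq_natDegree ((galois_poly_separable _ _ hchar).of_dvd hf) ?_
  rw [Algebra.algebraMap_self, map_id]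
  exact hsplits.of_dvd h0 hf

theorem natDegree_traceCoreGcd_X_pow_three {R : Type*} [CommRing R] [Nontrivial R] :
    (traceCoreGcd (X ^ 3 : R[X])).natDegree = 30 := by
  unfold traceCoreGcd; compute_degree!

theorem mem_rootSet_traceCoreGcd_X_pow_three {K : Type*} [Field K] (a : K) :
    a ∈ (traceCoreGcd (X ^ 3 : K[X])).rootSet K ↔ traceCoreGcd (a ^ 3) = 0 := by
  have h0 : traceCoreGcd (X ^ 3 : K[X]) ≠ 0 := fun h ↦ by
    simpa [h] using natDegree_traceCoreGcd_X_pow_three (R := K)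
  rw [mem_rootSet_of_ne h0, coe_aeval_eq_eval]
  simp [traceCoreGcd]

theorem card_rootSet_traceCoreGcd_X_pow_three {K : Type*} [Field K] [Fintype K] [CharP K 2]
    (hK : Fintype.card K = 1024) : Fintype.card ((traceCoreGcd (X ^ 3 : K[X])).rootSet K) = 30 := by
  have hdvd := traceCoreGcd_pow_three_dvd (X : K[X])
  rw [← hK] at hdvd
  rw [FiniteField.card_rootSet_of_dvd_X_pow_card_sub_X hdvd, natDegree_traceCoreGcd_X_pow_three]

section DegreeFiveOverFour

theorem charP_two_of_card_eq_four (F4 K : Type*) [Field F4] [Fintype F4] [Field K]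
    [Algebra F4 K] (h4 : Fintype.card F4 = 4) : CharP K 2 :=
  have : CharP F4 2 := charP_of_card_eq_prime_pow (f := 2) h4
  charP_of_injective_algebraMap' F4 2

variable {F4 K : Type*} [Field F4] [Fintype F4] [Field K] [Fintype K] [Algebra F4 K]
variable (h4 : Fintype.card F4 = 4) (h5 : Module.finrank F4 K = 5)
include h4 h5

theorem algebraMap_trace_eq_traceSum (x : K) :
    algebraMap F4 K (Algebra.trace F4 K x) = traceSum x := by
  rw [FiniteField.algebraMap_trace_eq_sum_pow, h5, Nat.card_eq_fintype_card, h4]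
  simp [Finset.sum_range_succ, traceSum]

theorem trace_eq_zero_iff (x : K) : Algebra.trace F4 K x = 0 ↔ traceSum x = 0 := by
  rw [← algebraMap_trace_eq_traceSum h4 h5, FaithfulSMul.algebraMap_eq_zero_iff]

theorem trace_eq_zero_and_trace_inv_eq_zero_iff (a : K) :
    Algebra.trace F4 K a = 0 ∧ Algebra.trace F4 K a⁻¹ = 0 ↔ a = 0 ∨ traceCoreGcd (a ^ 3) = 0 := by
  have := charP_two_of_card_eq_four F4 K h4
  rcases eq_or_ne a 0 with rfl | ha
  · simp
  have htrace : traceSum a = 0 ↔ traceCore (a ^ 3) = 0 := by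
    rw [traceSum_eq_mul_traceCore, mul_eq_zero, or_iff_right ha]
  have htrace_inv : traceSum a⁻¹ = 0 ↔ traceCoreRev (a ^ 3) = 0 := by
    rw [← pow_mul_traceSum_inv ha, mul_eq_zero, or_iff_right (pow_ne_zero _ ha)]
  rw [trace_eq_zero_iff h4 h5, trace_eq_zero_iff h4 h5, htrace, htrace_inv,
    traceCore_eq_zero_and_traceCoreRev_eq_zero_iff, or_iff_right ha]

end DegreeFiveOverFour

/-- `F_4(5,0,0) = 31`: for `F4` the field with `4` elements and `K` an
extension of `F4` of degree `5` (so `K` has `4^5 = 1024` elements), the number of `a ∈ K`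
with `Tr(a) = 0` and `Tr(a⁻¹) = 0` equals `31`, where `Tr` is the field trace from `K` to
`F4` and `0⁻¹ = 0` by convention. -/
theorem stmt11 (F4 K : Type) [Field F4] [Fintype F4] [Field K] [Fintype K] [Algebra F4 K]
    (h4 : Fintype.card F4 = 4) (h5 : Module.finrank F4 K = 5) :
    Nat.card {a : K // Algebra.trace F4 K a = 0 ∧ Algebra.trace F4 K a⁻¹ = 0} = 31 := by
  have := charP_two_of_card_eq_four F4 K h4
  have hK : Fintype.card K = 1024 := by
    rw [Module.card_eq_pow_finrank (K := F4), h4, h5]; norm_num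
  let roots := (traceCoreGcd (X ^ 3 : K[X])).rootSet K
  calc Nat.card {a : K // Algebra.trace F4 K a = 0 ∧ Algebra.trace F4 K a⁻¹ = 0}
      = Nat.card (insert 0 roots : Set K) := Nat.card_congr <| Equiv.subtypeEquivRight fun a ↦ by
        rw [trace_eq_zero_and_trace_inv_eq_zero_iff h4 h5, Set.mem_insert_iff,
          mem_rootSet_traceCoreGcd_X_pow_three]
    _ = 31 := by
      rw [Nat.card_coe_set_eq, Set.ncard_insert_of_notMem
          (by simp [roots, mem_rootSet_traceCoreGcd_X_pow_three, traceCoreGcd_zero]),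
        Set.ncard_eq_toFinset_card', Set.toFinset_card, card_rootSet_traceCoreGcd_X_pow_three hK]
end
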